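/- arXiv:2202.01567 — 2 statements merged into one kernel-verified Lean document; each statement's English description precedes it below -/
import Mathlib

section
/- If every Pinwheel instance of density at most 3/4 is feasible, then for every discrete BGT instance I with rates h_1 ≥ ... ≥ h_n summing to H, setting δ = 1/3 + h_1/H and f_i = ⌊(1+δ)H/h_i⌋ yields a Pinwheel instance of density strictly less than 3/4; consequently there is a schedule keeping all bamboos at height at most (4/3 + h_1/H)·H. -/
def lastCut {n : ℕ} (S : ℕ → Fin n) (i : Fin n) (t : ℕ) : ℕ :=
  ((Finset.range t).filter (fun s => S s = i)).sup id

noncomputable def bgtHeight {n : ℕ} (h : Fin n → ℝ) (S : ℕ → Fin n) (i : Fin n) (t : ℕ) : ℝ :=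
  h i * ((t : ℝ) - (lastCut S i t : ℝ))

def PinSched {n : ℕ} (f : Fin n → ℕ) (S : ℕ → Fin n) : Prop :=
  ∀ (i : Fin n) (t : ℕ), ∃ s, t ≤ s ∧ s < t + f i ∧ S s = i

def PinFeasible {n : ℕ} (f : Fin n → ℕ) : Prop :=
  ∃ S : ℕ → Fin n, PinSched f S

/-!
With `L = (1 + δ) H = 4/3 H + h₁`, bamboo `i` is given Pinwheel period `fᵢ = ⌊L / hᵢ⌋₊`. Since
`fᵢ > L / hᵢ - 1`, we get `1 / fᵢ < hᵢ / (L - hᵢ) ≤ hᵢ / (4/3 H) = 3/4 · hᵢ / H`, using `hᵢ ≤ h₁`;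
summing gives density `< 3/4`. A Pinwheel schedule revisits bamboo `i` within every `fᵢ` days,
so its height never exceeds `hᵢ fᵢ ≤ L`.
-/

open Finset

theorem PinSched.le_lastCut_add {n : ℕ} {f : Fin n → ℕ} {S : ℕ → Fin n} (hS : PinSched f S)
    (i : Fin n) (t : ℕ) : t ≤ lastCut S i t + f i := by
  by_cases ht : t ≤ f i
  · omega
  obtain ⟨s, hts, hst, hSs⟩ := hS i (t - f i)
  have hs : s ≤ lastCut S i t :=
    le_sup (f := id) (mem_filter.mpr ⟨mem_range.mpr (by omega), hSs⟩)
  omega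

theorem PinSched.bgtHeight_le {n : ℕ} {f : Fin n → ℕ} {S : ℕ → Fin n} (hS : PinSched f S)
    {h : Fin n → ℝ} {i : Fin n} (hi : 0 ≤ h i) (t : ℕ) : bgtHeight h S i t ≤ h i * f i := by
  have : (t : ℝ) ≤ lastCut S i t + f i := by exact_mod_cast hS.le_lastCut_add i t
  exact mul_le_mul_of_nonneg_left (by linarith) hi

theorem mul_floor_div_le {a L : ℝ} (ha : 0 < a) (hL : 0 ≤ L) : a * ⌊L / a⌋₊ ≤ L :=
  (le_div_iff₀' ha).mp (Nat.floor_le (div_nonneg hL ha.le))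

theorem two_le_floor_div {a L : ℝ} (ha : 0 < a) (h2 : 2 * a ≤ L) : 2 ≤ ⌊L / a⌋₊ :=
  Nat.le_floor (by rw [le_div_iff₀ ha]; exact_mod_cast h2)

theorem one_div_floor_div_lt {a L : ℝ} (ha : 0 < a) (haL : a < L) :
    1 / (⌊L / a⌋₊ : ℝ) < a / (L - a) := by
  have hpos : 0 < L / a - 1 := by rw [sub_pos, one_lt_div ha]; exact haL
  calc 1 / (⌊L / a⌋₊ : ℝ) < 1 / (L / a - 1) :=
        one_div_lt_one_div_of_lt hpos (Nat.sub_one_lt_floor _)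
    _ = a / (L - a) := by field_simp

theorem sum_one_div_floor_div_lt {ι : Type*} [Fintype ι] [Nonempty ι] {h : ι → ℝ} {m : ℝ}
    (hpos : ∀ i, 0 < h i) (hm : ∀ i, h i ≤ m) :
    ∑ i, 1 / (⌊(4 / 3 * ∑ j, h j + m) / h i⌋₊ : ℝ) < 3 / 4 := by
  set H := ∑ j, h j
  have hH : 0 < H := sum_pos (fun i _ => hpos i) univ_nonempty
  have hle : ∀ i, h i ≤ H := fun i => single_le_sum (fun j _ => (hpos j).le) (mem_univ i)
  calc ∑ i, 1 / (⌊(4 / 3 * H + m) / h i⌋₊ : ℝ)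
      < ∑ i, 3 / 4 * (h i / H) := by
        refine sum_lt_sum_of_nonempty univ_nonempty fun i _ => ?_
        have hi := hpos i
        have hmi := hm i
        have hHi := hle i
        calc 1 / (⌊(4 / 3 * H + m) / h i⌋₊ : ℝ) < h i / (4 / 3 * H + m - h i) :=
              one_div_floor_div_lt hi (by linarith)
          _ ≤ h i / (4 / 3 * H) := div_le_div_of_nonneg_left hi.le (by positivity) (by linarith)
          _ = 3 / 4 * (h i / H) := by field_simp
    _ = 3 / 4 := by rw [← mul_sum, ← sum_div, div_self hH.ne', mul_one]

/-- If every Pinwheel instance of density at most `3/4` is feasible, then for every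
BGT instance (rates `h` with maximum `h ⟨0,_⟩` and total `H`), taking
`δ = 1/3 + h₁/H` and `fᵢ = ⌊(1+δ)H/hᵢ⌋` gives a Pinwheel instance of density `< 3/4`;
consequently there is a schedule keeping all bamboos at height at most `(4/3 + h₁/H)·H`. -/
theorem bgt_four_thirds_approx
    (hyp : ∀ (m : ℕ) (g : Fin m → ℕ), (∀ i, 2 ≤ g i) →
      (∑ i, (1 : ℝ) / (g i)) ≤ 3 / 4 → PinFeasible g)
    (n : ℕ) (hn : 0 < n) (h : Fin n → ℝ) (hpos : ∀ i, 0 < h i)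
    (hmax : ∀ i, h i ≤ h ⟨0, hn⟩) :
    (∑ i, (1 : ℝ) /
        ((⌊(1 + (1/3 + h ⟨0, hn⟩ / ∑ j, h j)) * (∑ j, h j) / h i⌋₊ : ℕ) : ℝ)) < 3 / 4 ∧
    ∃ S : ℕ → Fin n, ∀ (i : Fin n) (t : ℕ),
      bgtHeight h S i t ≤ (4/3 + h ⟨0, hn⟩ / ∑ j, h j) * ∑ j, h j := by
  set H := ∑ j, h j
  set h₁ := h ⟨0, hn⟩
  have : Nonempty (Fin n) := ⟨⟨0, hn⟩⟩
  have hH : 0 < H := sum_pos (fun i _ => hpos i) univ_nonempty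
  have hL : (1 + (1 / 3 + h₁ / H)) * H = 4 / 3 * H + h₁ := by field_simp; ring
  have hL' : (4 / 3 + h₁ / H) * H = 4 / 3 * H + h₁ := by field_simp
  have hdensity := sum_one_div_floor_div_lt hpos hmax
  refine ⟨by rwa [hL], ?_⟩
  have hperiod : ∀ i, 2 ≤ ⌊(4 / 3 * H + h₁) / h i⌋₊ := fun i =>
    two_le_floor_div (hpos i) (by
      linarith [hmax i, single_le_sum (fun j _ => (hpos j).le) (mem_univ i) (f := h)])
  obtain ⟨S, hS⟩ := hyp n _ hperiod hdensity.le
  refine ⟨S, fun i t => ?_⟩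
  rw [hL']
  exact (hS.bgtHeight_le (hpos i).le t).trans
    (mul_floor_div_le (hpos i) (by linarith [hpos ⟨0, hn⟩]))
end

section
/- For the discrete BGT instance (3/8−ε, 1/4, 1/4), with 0 < ε < 1/24, the optimal maximum height is 1 (achieved by the periodic schedule (1,2,1,3)), while the Reduce-Max schedule lets bamboo b_1 reach height 9/8 − 3ε. Hence the approximation ratio of Reduce-Max is at least 9/8. -/
/-!
Every bamboo of the schedule `(b₁, b₂, b₁, b₃)` is cut at a fixed residue class, so at any
time it has grown for at most its period (2 days for `b₁`, 4 for `b₂, b₃`), giving heights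
`≤ max (2 h₁) (4 h₂) = 1`. Reduce-Max, in contrast, is forced to cut `b₁, b₂, b₃` on days
`1, 2, 3`: on day 3 the tie-break is avoided only because `2 h₁ = 3/4 - 2ε < 3/4 = 3 h₃`.
So on day 4 bamboo `b₁` has grown for three days.
-/

section LastCut

variable {n : ℕ} (S : ℕ → Fin n) (i : Fin n)

@[simp]
lemma lastCut_zero : lastCut S i 0 = 0 := by
  simp [lastCut]

lemma lastCut_succ (t : ℕ) :
    lastCut S i (t + 1) = if S t = i then t else lastCut S i t := by
  unfold lastCut
  rw [Finset.range_add_one, Finset.filter_insert]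
  split_ifs
  · rw [Finset.sup_insert, id, max_eq_left]
    exact Finset.sup_le fun s hs => (Finset.mem_range.mp (Finset.mem_filter.mp hs).1).le
  · rfl

lemma le_lastCut {t m : ℕ} (hm : m < t) (hSm : S m = i) : m ≤ lastCut S i t :=
  Finset.le_sup (f := id) (Finset.mem_filter.mpr ⟨Finset.mem_range.mpr hm, hSm⟩)

lemma le_lastCut_add_of_mod_eq {k r : ℕ} (hr : r < k) (hS : ∀ m, m % k = r → S m = i)
    (t : ℕ) : t ≤ lastCut S i t + k := by
  rcases le_or_gt t k with htk | hkt
  · omega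
  · -- the last day before `t` in the residue class of `r`
    set m := (t - 1 - r) / k * k + r
    have hmk : m % k = r := Nat.mul_add_mod_of_lt hr
    have hmt : m < t := by
      have := Nat.div_mul_le_self (t - 1 - r) k
      omega
    have htm : t ≤ m + k := by
      have := Nat.lt_div_mul_add (a := t - 1 - r) (by omega : 0 < k)
      omega
    have := le_lastCut S i hmt (hS m hmk)
    omega

lemma bgtHeight_le_of_mod_eq (h : Fin n → ℝ) (hi : 0 ≤ h i) {k r : ℕ} (hr : r < k)
    (hS : ∀ m, m % k = r → S m = i) (t : ℕ) : bgtHeight h S i t ≤ h i * k := by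
  have : (t : ℝ) ≤ lastCut S i t + k := by exact_mod_cast le_lastCut_add_of_mod_eq S i hr hS t
  exact mul_le_mul_of_nonneg_left (by linarith) hi

end LastCut

def IsReduceMax {n : ℕ} (h : Fin n → ℝ) (S : ℕ → Fin n) : Prop :=
  ∀ t, 1 ≤ t → ∀ j : Fin n,
    bgtHeight h S j t ≤ bgtHeight h S (S t) t ∧
      (bgtHeight h S j t = bgtHeight h S (S t) t → S t ≤ j)

lemma IsReduceMax.apply_eq {n : ℕ} {h : Fin n → ℝ} {S : ℕ → Fin n} (hS : IsReduceMax h S)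
    {t : ℕ} (ht : 1 ≤ t) {i : Fin n} (hmax : ∀ j, bgtHeight h S j t ≤ bgtHeight h S i t)
    (hlt : ∀ j < i, bgtHeight h S j t < bgtHeight h S i t) : S t = i := by
  have hle := (hS t ht i).1
  have hge : S t ≤ i := (hS t ht i).2 (le_antisymm hle (hmax _))
  by_contra hne
  exact (hlt (S t) (lt_of_le_of_ne hge hne)).not_ge hle

def periodicSchedule (t : ℕ) : Fin 3 :=
  ![2, 0, 1, 0] ⟨t % 4, Nat.mod_lt t four_pos⟩

lemma bgtHeight_periodicSchedule_le_one {ε : ℝ} (hε0 : 0 ≤ ε) (hε : ε ≤ 3/8) (i : Fin 3)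
    (t : ℕ) : bgtHeight ![3/8 - ε, 1/4, 1/4] periodicSchedule i t ≤ 1 := by
  fin_cases i
  · have hS : ∀ m, m % 2 = 1 → periodicSchedule m = 0 := by
      intro m hm
      rcases (by omega : m % 4 = 1 ∨ m % 4 = 3) with h4 | h4 <;>
        simp only [periodicSchedule, h4] <;> rfl
    exact (bgtHeight_le_of_mod_eq _ _ _ (by simp; linarith) one_lt_two hS t).trans
      (by norm_num; linarith)
  · have hS : ∀ m, m % 4 = 2 → periodicSchedule m = 1 := by
      intro m hm
      simp only [periodicSchedule, hm]
      rfl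
    exact (bgtHeight_le_of_mod_eq _ _ _ (by simp) (by norm_num) hS t).trans (by norm_num)
  · have hS : ∀ m, m % 4 = 0 → periodicSchedule m = 2 := by
      intro m hm
      simp only [periodicSchedule, hm]
      rfl
    exact (bgtHeight_le_of_mod_eq _ _ _ (by simp) (by norm_num) hS t).trans (by simp)

lemma IsReduceMax.nine_eighths_le_bgtHeight {ε : ℝ} (hε0 : 0 < ε) (hε : ε ≤ 1/8)
    {S : ℕ → Fin 3} (hS : IsReduceMax ![3/8 - ε, 1/4, 1/4] S) :
    9/8 - 3 * ε ≤ bgtHeight ![3/8 - ε, 1/4, 1/4] S 0 4 := by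
  have hS1 : S 1 = 0 := hS.apply_eq le_rfl
    (by intro j; fin_cases j <;> simp [bgtHeight, lastCut_succ] <;> linarith)
    (by intro j hj; fin_cases j <;> simp at hj)
  have hS2 : S 2 = 1 := hS.apply_eq (by norm_num)
    (by intro j; fin_cases j <;> simp [bgtHeight, lastCut_succ, hS1]; linarith)
    (by intro j hj; fin_cases j <;> simp [bgtHeight, lastCut_succ, hS1] at hj ⊢; linarith)
  have hS3 : S 3 = 2 := hS.apply_eq (by norm_num)
    (by intro j; fin_cases j <;> simp [bgtHeight, lastCut_succ, hS1, hS2]; linarith)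
    (by intro j hj; fin_cases j <;> simp [bgtHeight, lastCut_succ, hS1, hS2] at hj ⊢; linarith)
  simp [bgtHeight, lastCut_succ, hS1, hS2, hS3]
  linarith

/-- For the instance `(3/8-ε, 1/4, 1/4)` with `0 < ε < 1/24`: the periodic schedule
repeating `(b₁,b₂,b₁,b₃)` keeps all heights at most `1` (so `OPT ≤ 1`), while any
Reduce-Max schedule (each day cut a currently highest bamboo, ties broken towards the
lower index) lets bamboo `b₁` reach height `9/8 - 3ε`.  Hence the approximation ratio
of Reduce-Max is at least `9/8`. -/
theorem reduce_max_nine_eighths (ε : ℝ) (hε0 : 0 < ε) (hε : ε < 1/24) :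
    (∀ (i : Fin 3) (t : ℕ),
        bgtHeight ![3/8 - ε, 1/4, 1/4]
          (fun t => ![2, 0, 1, 0] ⟨t % 4, by omega⟩) i t ≤ 1) ∧
    (∀ S : ℕ → Fin 3,
      (∀ t, 1 ≤ t → ∀ j : Fin 3,
          bgtHeight ![3/8 - ε, 1/4, 1/4] S j t ≤
            bgtHeight ![3/8 - ε, 1/4, 1/4] S (S t) t ∧
          (bgtHeight ![3/8 - ε, 1/4, 1/4] S j t =
            bgtHeight ![3/8 - ε, 1/4, 1/4] S (S t) t → S t ≤ j)) →
      ∃ t : ℕ, (9 : ℝ)/8 - 3 * ε ≤ bgtHeight ![3/8 - ε, 1/4, 1/4] S 0 t) :=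
  ⟨bgtHeight_periodicSchedule_le_one hε0.le (by linarith),
    fun _ hS => ⟨4, IsReduceMax.nine_eighths_le_bgtHeight hε0 (by linarith) hS⟩⟩
end
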